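/- Resource bisimilarity ≃ is transitive: if r₁ ≃ r₂ and r₂ ≃ r₃ then r₁ ≃ r₃; concretely, the composition relation {(r₁,r₃) | ∃ r₂, r₁ ≃ r₂ ∧ r₂ ≃ r₃} is a resource bisimulation. -/

import Mathlib

/-- A labeled Petri net: places `P`, transitions `T`, action labels `Act`. -/
structure LPN (P T Act : Type) where
  pre : T → P → ℕ
  post : T → P → ℕ
  lab : T → Act

variable {P T Act : Type}

/-- Firing relation: `M` fires `t` yielding `M'`. -/
def Fires (N : LPN P T Act) (M : P → ℕ) (t : T) (M' : P → ℕ) : Prop :=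
  N.pre t ≤ M ∧ M' = fun p => M p - N.pre t p + N.post t p

/-- `R` satisfies the (ordinary) transfer property w.r.t. `R'`. -/
def Transfer (N : LPN P T Act) (R R' : (P → ℕ) → (P → ℕ) → Prop) : Prop :=
  ∀ M₁ M₂, R M₁ M₂ → ∀ t M₁', Fires N M₁ t M₁' →
    ∃ u M₂', N.lab u = N.lab t ∧ Fires N M₂ u M₂' ∧ R' M₁' M₂'

/-- `R` is a bisimulation. -/
def IsBisim (N : LPN P T Act) (R : (P → ℕ) → (P → ℕ) → Prop) : Prop :=
  Transfer N R R ∧ Transfer N (fun a b => R b a) (fun a b => R b a)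

/-- Bisimilarity `∼`. -/
def Bisim (N : LPN P T Act) (M₁ M₂ : P → ℕ) : Prop :=
  ∃ R, IsBisim N R ∧ R M₁ M₂

/-- A congruence on markings: an equivalence compatible with addition. -/
def IsCongruence (ρ : (P → ℕ) → (P → ℕ) → Prop) : Prop :=
  Equivalence ρ ∧ ∀ r₁ r₂ s, ρ r₁ r₂ → ρ (r₁ + s) (r₂ + s)

/-- Resource similarity `≈`. -/
def ResSim (N : LPN P T Act) (r s : P → ℕ) : Prop :=
  ∀ w, Bisim N (r + w) (s + w)

/-- `R` satisfies the resource transfer property w.r.t. `R'`. -/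
def ResTransfer (N : LPN P T Act) (R R' : (P → ℕ) → (P → ℕ) → Prop) : Prop :=
  ∀ r s, R r s → ∀ t r', Fires N (fun p => r p + (N.pre t p - r p)) t r' →
    ∃ u s', N.lab u = N.lab t ∧
      Fires N (fun p => s p + (N.pre t p - r p)) u s' ∧ R' r' s'

/-- `R` is a resource bisimulation. -/
def IsResBisim (N : LPN P T Act) (R : (P → ℕ) → (P → ℕ) → Prop) : Prop :=
  ResTransfer N R R ∧ ResTransfer N (fun a b => R b a) (fun a b => R b a)

/-- Resource bisimilarity `≃`. -/
def ResBisim (N : LPN P T Act) (r s : P → ℕ) : Prop :=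
  ∃ R, IsResBisim N R ∧ R r s

/-- Stratified bisimilarity `∼ᵢ`. -/
def Strat (N : LPN P T Act) : ℕ → (P → ℕ) → (P → ℕ) → Prop
  | 0, _, _ => True
  | i + 1, M₁, M₂ =>
      (∀ t M₁', Fires N M₁ t M₁' →
        ∃ u M₂', N.lab u = N.lab t ∧ Fires N M₂ u M₂' ∧ Strat N i M₁' M₂') ∧
      (∀ t M₂', Fires N M₂ t M₂' →
        ∃ u M₁', N.lab u = N.lab t ∧ Fires N M₁ u M₁' ∧ Strat N i M₂' M₁')

/-- Stratified resource bisimilarity `≃ᵢ`. -/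
def StratRes (N : LPN P T Act) : ℕ → (P → ℕ) → (P → ℕ) → Prop
  | 0, _, _ => True
  | i + 1, r, s =>
      (∀ t r', Fires N (fun p => r p + (N.pre t p - r p)) t r' →
        ∃ u s', N.lab u = N.lab t ∧
          Fires N (fun p => s p + (N.pre t p - r p)) u s' ∧ StratRes N i r' s') ∧
      (∀ t s', Fires N (fun p => s p + (N.pre t p - s p)) t s' →
        ∃ u r', N.lab u = N.lab t ∧
          Fires N (fun p => r p + (N.pre t p - s p)) u r' ∧ StratRes N i s' r')

/-- The equivalence level: the largest `i` with `r ≃ᵢ s` (`⊤` = ω if all `i`). -/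
noncomputable def eqlev (N : LPN P T Act) (r s : P → ℕ) : ℕ∞ :=
  sSup {n : ℕ∞ | ∃ i : ℕ, n = (i : ℕ∞) ∧ StratRes N i r s}

/-!
Resource bisimilarity is a congruence: adding a common resource `w` to a resource bisimulation
yields one again, because an enabling supplement for `r + w` splits as the supplement for `r`
plus a common surplus `k` that rides along every firing. Transitivity then follows by passing
through the middle marking: once `r₁ + d` fires `t` with `d` its supplement, the matching firing
of `r₂ + d` needs no further supplement, and congruence turns `r₂ ≃ r₃` into `r₂ + d ≃ r₃ + d`,
whose transfer property is then ordinary.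
-/

open Relation

section

variable {N : LPN P T Act}

theorem Fires.add_right {M M' : P → ℕ} {t : T} (h : Fires N M t M') (k : P → ℕ) :
    Fires N (M + k) t (M' + k) := by
  obtain ⟨hle, rfl⟩ := h
  refine ⟨hle.trans le_self_add, funext fun p => ?_⟩
  have : N.pre t p ≤ M p := hle p
  simp only [Pi.add_apply]
  omega

theorem Fires.exists_of_add_right {M k M'' : P → ℕ} {t : T} (h : Fires N (M + k) t M'')
    (hle : N.pre t ≤ M) : ∃ M', Fires N M t M' ∧ M'' = M' + k := by
  obtain ⟨-, rfl⟩ := h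
  refine ⟨_, ⟨hle, rfl⟩, funext fun p => ?_⟩
  have : N.pre t p ≤ M p := hle p
  simp only [Pi.add_apply]
  omega

theorem exists_supplement_eq_add (r s w m : P → ℕ) :
    ∃ k, r + w + (m - (r + w)) = r + (m - r) + k ∧ s + w + (m - (r + w)) = s + (m - r) + k := by
  refine ⟨fun p => w p + (m p - (r p + w p)) - (m p - r p), funext fun p => ?_,
    funext fun p => ?_⟩ <;>
  · simp only [Pi.add_apply, Pi.sub_apply]
    omega

theorem ResTransfer.exists_fires {R R' : (P → ℕ) → (P → ℕ) → Prop} (h : ResTransfer N R R')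
    {r s r' : P → ℕ} (hrs : R r s) {t : T} (hf : Fires N r t r') :
    ∃ u s', N.lab u = N.lab t ∧ Fires N s u s' ∧ R' r' s' := by
  have hd : N.pre t - r = 0 := tsub_eq_zero_of_le hf.1
  have := h r s hrs t r' (by simpa [← Pi.sub_apply, hd] using hf)
  simpa [← Pi.sub_apply, hd] using this

def AddClosure (R : (P → ℕ) → (P → ℕ) → Prop) (a b : P → ℕ) : Prop :=
  ∃ r s w, R r s ∧ a = r + w ∧ b = s + w

theorem addClosure_flip (R : (P → ℕ) → (P → ℕ) → Prop) :
    flip (AddClosure R) = AddClosure (flip R) := by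
  funext a b
  exact propext ⟨fun ⟨r, s, w, h, hb, ha⟩ => ⟨s, r, w, h, ha, hb⟩,
    fun ⟨s, r, w, h, ha, hb⟩ => ⟨r, s, w, h, hb, ha⟩⟩

theorem ResTransfer.addClosure {R R' : (P → ℕ) → (P → ℕ) → Prop} (h : ResTransfer N R R') :
    ResTransfer N (AddClosure R) (AddClosure R') := by
  rintro _ _ ⟨r, s, w, hrs, rfl, rfl⟩ t a' hf
  obtain ⟨k, hr, hs⟩ := exists_supplement_eq_add r s w (N.pre t)
  change Fires N (r + w + (N.pre t - (r + w))) t a' at hf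
  rw [hr] at hf
  obtain ⟨r', hfr, rfl⟩ := hf.exists_of_add_right le_add_tsub
  obtain ⟨u, s', hlab, hfs, hrs'⟩ := h r s hrs t r' hfr
  refine ⟨u, s' + k, hlab, ?_, r', s', k, hrs', rfl, rfl⟩
  change Fires N (s + w + (N.pre t - (r + w))) u (s' + k)
  rw [hs]
  exact hfs.add_right k

theorem IsResBisim.addClosure {R : (P → ℕ) → (P → ℕ) → Prop} (h : IsResBisim N R) :
    IsResBisim N (AddClosure R) := by
  refine ⟨h.1.addClosure, ?_⟩
  change ResTransfer N (flip (AddClosure R)) (flip (AddClosure R))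
  rw [addClosure_flip]
  exact h.2.addClosure

theorem ResBisim.symm {r s : P → ℕ} (h : ResBisim N r s) : ResBisim N s r := by
  obtain ⟨R, ⟨hR, hR'⟩, hrs⟩ := h
  exact ⟨fun a b => R b a, ⟨hR', hR⟩, hrs⟩

theorem resBisim_flip : flip (ResBisim N) = ResBisim N :=
  funext₂ fun _ _ => propext ⟨ResBisim.symm, ResBisim.symm⟩

theorem ResBisim.add_right {r s : P → ℕ} (h : ResBisim N r s) (w : P → ℕ) :
    ResBisim N (r + w) (s + w) := by
  obtain ⟨R, hR, hrs⟩ := h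
  exact ⟨AddClosure R, hR.addClosure, r, s, w, hrs, rfl, rfl⟩

theorem resTransfer_resBisim : ResTransfer N (ResBisim N) (ResBisim N) := by
  rintro r s ⟨R, hR, hrs⟩ t r' hf
  obtain ⟨u, s', hlab, hfs, hrs'⟩ := hR.1 r s hrs t r' hf
  exact ⟨u, s', hlab, hfs, R, hR, hrs'⟩

theorem resTransfer_comp_resBisim :
    ResTransfer N (Comp (ResBisim N) (ResBisim N)) (Comp (ResBisim N) (ResBisim N)) := by
  rintro r₁ r₃ ⟨r₂, h₁₂, h₂₃⟩ t r₁' hf₁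
  obtain ⟨u, r₂', hlab₂, hf₂, h₁₂'⟩ := resTransfer_resBisim r₁ r₂ h₁₂ t r₁' hf₁
  obtain ⟨v, r₃', hlab₃, hf₃, h₂₃'⟩ :=
    resTransfer_resBisim.exists_fires (h₂₃.add_right (N.pre t - r₁)) hf₂
  exact ⟨v, r₃', hlab₃.trans hlab₂, hf₃, r₂', h₁₂', h₂₃'⟩

theorem isResBisim_comp_resBisim : IsResBisim N (Comp (ResBisim N) (ResBisim N)) := by
  refine ⟨resTransfer_comp_resBisim, ?_⟩
  change ResTransfer N (flip (Comp (ResBisim N) (ResBisim N)))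
    (flip (Comp (ResBisim N) (ResBisim N)))
  rw [flip_comp, resBisim_flip]
  exact resTransfer_comp_resBisim

end

/-- Resource bisimilarity is transitive; concretely the composition relation
`{(r₁,r₃) | ∃ r₂, r₁ ≃ r₂ ∧ r₂ ≃ r₃}` is a resource bisimulation. -/
theorem resBisim_trans (N : LPN P T Act) :
    IsResBisim N (fun r₁ r₃ => ∃ r₂, ResBisim N r₁ r₂ ∧ ResBisim N r₂ r₃) ∧
      ∀ r₁ r₂ r₃ : P → ℕ, ResBisim N r₁ r₂ → ResBisim N r₂ r₃ → ResBisim N r₁ r₃ :=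
  ⟨isResBisim_comp_resBisim,
    fun _ r₂ _ h₁₂ h₂₃ => ⟨_, isResBisim_comp_resBisim, r₂, h₁₂, h₂₃⟩⟩
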